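/- arXiv:2304.11665 — 6 statements merged into one kernel-verified Lean document; each statement's English description precedes it below -/
import Mathlib

section
/- Let n ≥ 1, L > 0, and let f_1, …, f_n : ℝ^d → ℝ be convex differentiable functions whose gradients are L-Lipschitz. Set F = (1/n) Σ_{i=1}^n f_i. For y, x̃ ∈ ℝ^d and each i define the variance-reduced gradient v_i = ∇F(x̃) + ∇f_i(y) − ∇f_i(x̃). Then (1/n) Σ_{i=1}^{n} (1/(2L)) ‖∇F(y) − v_i‖² ≤ F(x̃) − F(y) − ⟨∇F(y), x̃ − y⟩. -/
/-!
With `aᵢ = ∇fᵢ(x̃) − ∇fᵢ(y)`, the deviation `∇F(y) − vᵢ` is `aᵢ` minus the mean of the `aᵢ`,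
so the left side is at most the average of `‖aᵢ‖² / (2L)` (a variance is at most the second
moment). Each `‖aᵢ‖² / (2L)` is at most the Bregman divergence of `fᵢ` between `x̃` and `y`
(co-coercivity of convex `L`-smooth functions), and Bregman divergences average linearly to that
of `F`, which is the right side.
-/

open scoped RealInnerProductSpace

open Finset

section Variance

variable {E : Type*} [NormedAddCommGroup E] [InnerProductSpace ℝ E]

theorem sum_norm_sub_average_sq_le {ι : Type*} (s : Finset ι) (a : ι → E) :
    ∑ i ∈ s, ‖a i - (#s : ℝ)⁻¹ • ∑ j ∈ s, a j‖ ^ 2 ≤ ∑ i ∈ s, ‖a i‖ ^ 2 := by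
  set m := (#s : ℝ)⁻¹ • ∑ j ∈ s, a j
  have hsum : ∑ j ∈ s, a j = (#s : ℝ) • m := by
    rcases s.eq_empty_or_nonempty with rfl | hs
    · simp
    · rw [smul_inv_smul₀ (by positivity)]
  calc ∑ i ∈ s, ‖a i - m‖ ^ 2
      = ∑ i ∈ s, ‖a i‖ ^ 2 - 2 * ⟪∑ i ∈ s, a i, m⟫ + #s * ‖m‖ ^ 2 := by
        simp only [norm_sub_sq_real, sum_add_distrib, sum_sub_distrib, ← mul_sum, sum_inner,
          sum_const, nsmul_eq_mul]
    _ = ∑ i ∈ s, ‖a i‖ ^ 2 - #s * ‖m‖ ^ 2 := by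
        rw [hsum, real_inner_smul_left, real_inner_self_eq_norm_sq]; ring
    _ ≤ ∑ i ∈ s, ‖a i‖ ^ 2 := by
        linarith [show (0 : ℝ) ≤ #s * ‖m‖ ^ 2 by positivity]

end Variance

section Gradient

variable {E : Type*} [NormedAddCommGroup E] [InnerProductSpace ℝ E] [CompleteSpace E]
  {f : E → ℝ} {x y : E}

theorem hasDerivAt_comp_add_smul (a v : E) (t : ℝ) (hf : DifferentiableAt ℝ f (a + t • v)) :
    HasDerivAt (fun s : ℝ => f (a + s • v)) ⟪gradient f (a + t • v), v⟫ t := by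
  have hline : HasDerivAt (fun s : ℝ => a + s • v) v t :=
    ((hasDerivAt_id t).smul_const v).const_add a |>.congr_deriv (one_smul ℝ v)
  rw [inner_gradient_left]
  exact hf.hasFDerivAt.comp_hasDerivAt t hline

theorem ConvexOn.add_inner_gradient_le {s : Set E} (hc : ConvexOn ℝ s f) (hx : x ∈ s)
    (hy : y ∈ s) (hf : DifferentiableAt ℝ f x) : f x + ⟪gradient f x, y - x⟫ ≤ f y := by
  have hline : ConvexOn ℝ (Set.Icc 0 1) (fun t : ℝ => f (x + t • (y - x))) := by
    have hcomp : (fun t : ℝ => f (x + t • (y - x))) = f ∘ AffineMap.lineMap x y := by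
      ext t
      simp [AffineMap.lineMap_apply_module', add_comm]
    rw [hcomp]
    exact (hc.comp_affineMap _).subset (fun t ht => hc.1.lineMap_mem hx hy ht) (convex_Icc 0 1)
  have hderiv := hasDerivAt_comp_add_smul x (y - x) 0 (by simpa using hf)
  have hslope := hline.le_slope_of_hasDerivAt (Set.left_mem_Icc.2 zero_le_one)
    (Set.right_mem_Icc.2 zero_le_one) zero_lt_one hderiv
  simp only [slope_def_field, zero_smul, add_zero, one_smul, add_sub_cancel, sub_zero,
    div_one] at hslope
  linarith

theorem descent_lemma (hf : Differentiable ℝ f) {L : ℝ}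
    (hlip : ∀ x y, ‖gradient f x - gradient f y‖ ≤ L * ‖x - y‖) (a b : E) :
    f b ≤ f a + ⟪gradient f a, b - a⟫ + L / 2 * ‖b - a‖ ^ 2 := by
  set v := b - a
  set φ : ℝ → ℝ := fun t => f (a + t • v) - t * ⟪gradient f a, v⟫ - L / 2 * t ^ 2 * ‖v‖ ^ 2
  have hφ : ∀ t, HasDerivAt φ (⟪gradient f (a + t • v) - gradient f a, v⟫ - L * t * ‖v‖ ^ 2) t := by
    intro t
    refine (((hasDerivAt_comp_add_smul a v t (hf _)).sub
      ((hasDerivAt_id t).mul_const ⟪gradient f a, v⟫)).sub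
      (((hasDerivAt_pow 2 t).const_mul (L / 2)).mul_const (‖v‖ ^ 2))).congr_deriv ?_
    rw [inner_sub_left]
    push_cast
    ring
  have hφ' : ∀ t ∈ interior (Set.Icc (0 : ℝ) 1),
      ⟪gradient f (a + t • v) - gradient f a, v⟫ - L * t * ‖v‖ ^ 2 ≤ 0 := by
    intro t ht
    rw [interior_Icc] at ht
    have hinner : ⟪gradient f (a + t • v) - gradient f a, v⟫ ≤ L * t * ‖v‖ ^ 2 :=
      calc ⟪gradient f (a + t • v) - gradient f a, v⟫
          ≤ ‖gradient f (a + t • v) - gradient f a‖ * ‖v‖ := real_inner_le_norm _ _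
        _ ≤ L * ‖t • v‖ * ‖v‖ := by grw [hlip, add_sub_cancel_left]
        _ = L * t * ‖v‖ ^ 2 := by rw [norm_smul, Real.norm_of_nonneg ht.1.le]; ring
    linarith
  have hanti := antitoneOn_of_hasDerivWithinAt_nonpos (convex_Icc 0 1)
    (HasDerivAt.continuousOn fun t _ => hφ t) (fun t _ => (hφ t).hasDerivWithinAt) hφ'
  have hends := hanti (Set.left_mem_Icc.2 zero_le_one) (Set.right_mem_Icc.2 zero_le_one)
    zero_le_one
  simp only [φ, v, zero_smul, one_smul, add_zero, add_sub_cancel] at hends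
  linarith

noncomputable def bregmanDiv (f : E → ℝ) (x y : E) : ℝ :=
  f x - f y - ⟪gradient f y, x - y⟫

theorem ConvexOn.sq_norm_gradient_sub_le_bregmanDiv (hc : ConvexOn ℝ Set.univ f)
    (hf : Differentiable ℝ f) {L : ℝ} (hL : 0 < L)
    (hlip : ∀ x y, ‖gradient f x - gradient f y‖ ≤ L * ‖x - y‖) (x y : E) :
    1 / (2 * L) * ‖gradient f x - gradient f y‖ ^ 2 ≤ bregmanDiv f x y := by
  set w := gradient f x - gradient f y
  -- evaluate the descent upper bound and the convexity lower bound at the gradient step `z`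
  set z := x - L⁻¹ • w
  have hupper := descent_lemma hf hlip x z
  have hlower := hc.add_inner_gradient_le (Set.mem_univ y) (Set.mem_univ z) (hf y)
  have hzx : z - x = -(L⁻¹ • w) := by simp [z]
  have hzy : z - y = (x - y) - L⁻¹ • w := by simp only [z]; abel
  have hww : L⁻¹ * ⟪gradient f x, w⟫ - L⁻¹ * ⟪gradient f y, w⟫ = L⁻¹ * ‖w‖ ^ 2 := by
    rw [← mul_sub, ← inner_sub_left, real_inner_self_eq_norm_sq]
  rw [hzx, inner_neg_right, real_inner_smul_right, norm_neg, norm_smul, Real.norm_of_nonneg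
    (inv_nonneg.2 hL.le)] at hupper
  rw [hzy, inner_sub_right, real_inner_smul_right] at hlower
  have hcoeff : 1 / (2 * L) * ‖w‖ ^ 2 = L⁻¹ * ‖w‖ ^ 2 - L / 2 * (L⁻¹ * ‖w‖) ^ 2 := by
    field_simp; ring
  rw [bregmanDiv]
  linarith

theorem HasGradientAt.const_mul_sum {ι : Type*} (s : Finset ι) {f : ι → E → ℝ} {f' : ι → E}
    (h : ∀ i ∈ s, HasGradientAt (f i) (f' i) x) (c : ℝ) :
    HasGradientAt (fun y => c * ∑ i ∈ s, f i y) (c • ∑ i ∈ s, f' i) x := by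
  rw [hasGradientAt_iff_hasFDerivAt, map_smul, map_sum]
  exact (HasFDerivAt.fun_sum fun i hi => (h i hi).hasFDerivAt).const_mul c

theorem bregmanDiv_const_mul_sum {ι : Type*} (s : Finset ι) {f : ι → E → ℝ}
    (hf : ∀ i ∈ s, DifferentiableAt ℝ (f i) y) (c : ℝ) (x : E) :
    bregmanDiv (fun z => c * ∑ i ∈ s, f i z) x y = c * ∑ i ∈ s, bregmanDiv (f i) x y := by
  have hgrad := (HasGradientAt.const_mul_sum s (fun i hi => (hf i hi).hasGradientAt) c).gradient
  simp only [bregmanDiv, hgrad, real_inner_smul_left, sum_inner, sum_sub_distrib]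
  ring

end Gradient

theorem svrg_variance_bound_general (d n : ℕ) (L : ℝ) (hL : 0 < L)
    (f : Fin n → EuclideanSpace ℝ (Fin d) → ℝ)
    (hconv : ∀ i, ConvexOn ℝ Set.univ (f i))
    (hdiff : ∀ i, Differentiable ℝ (f i))
    (hlip : ∀ i x y, ‖gradient (f i) x - gradient (f i) y‖ ≤ L * ‖x - y‖)
    (F : EuclideanSpace ℝ (Fin d) → ℝ)
    (hF : ∀ x, F x = (1 / (n : ℝ)) * ∑ i, f i x)
    (y xt : EuclideanSpace ℝ (Fin d))
    (v : Fin n → EuclideanSpace ℝ (Fin d))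
    (hv : ∀ i, v i = gradient F xt + gradient (f i) y - gradient (f i) xt) :
    (1 / (n : ℝ)) * ∑ i, (1 / (2 * L)) * ‖gradient F y - v i‖ ^ 2
      ≤ F xt - F y - ⟪gradient F y, xt - y⟫ := by
  have hgrad x : gradient F x = (1 / (n : ℝ)) • ∑ i, gradient (f i) x := by
    rw [funext hF]
    exact (HasGradientAt.const_mul_sum univ (fun i _ => (hdiff i x).hasGradientAt) _).gradient
  set a := fun i => gradient (f i) xt - gradient (f i) y
  have hdev i : gradient F y - v i = a i - (#(univ : Finset (Fin n)) : ℝ)⁻¹ • ∑ j, a j := by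
    rw [hv, hgrad, hgrad]
    simp only [a, sum_sub_distrib, smul_sub, card_univ, Fintype.card_fin, one_div]
    abel
  calc (1 / (n : ℝ)) * ∑ i, 1 / (2 * L) * ‖gradient F y - v i‖ ^ 2
      ≤ (1 / (n : ℝ)) * ∑ i, 1 / (2 * L) * ‖a i‖ ^ 2 := by
        simp only [hdev, ← mul_sum]
        gcongr _ * (_ * ?_)
        exact sum_norm_sub_average_sq_le univ a
    _ ≤ (1 / (n : ℝ)) * ∑ i, bregmanDiv (f i) xt y := by
        gcongr with i
        exact (hconv i).sq_norm_gradient_sub_le_bregmanDiv (hdiff i) hL (hlip i) xt y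
    _ = bregmanDiv F xt y := by
        rw [funext hF, bregmanDiv_const_mul_sum univ (fun i _ => hdiff i y)]

/-- SVRG variance bound: for convex `L`-smooth components `f_i` with average `F`
and variance-reduced gradients `v_i = ∇F(x̃) + ∇f_i(y) − ∇f_i(x̃)`,
`(1/n) Σ_i (1/(2L)) ‖∇F(y) − v_i‖² ≤ F(x̃) − F(y) − ⟨∇F(y), x̃ − y⟩`. -/
theorem svrg_variance_bound (d n : ℕ) (hn : 1 ≤ n) (L : ℝ) (hL : 0 < L)
    (f : Fin n → EuclideanSpace ℝ (Fin d) → ℝ)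
    (hconv : ∀ i, ConvexOn ℝ Set.univ (f i))
    (hdiff : ∀ i, Differentiable ℝ (f i))
    (hlip : ∀ i x y, ‖gradient (f i) x - gradient (f i) y‖ ≤ L * ‖x - y‖)
    (F : EuclideanSpace ℝ (Fin d) → ℝ)
    (hF : ∀ x, F x = (1 / (n : ℝ)) * ∑ i, f i x)
    (y xt : EuclideanSpace ℝ (Fin d))
    (v : Fin n → EuclideanSpace ℝ (Fin d))
    (hv : ∀ i, v i = gradient F xt + gradient (f i) y - gradient (f i) xt) :
    (1 / (n : ℝ)) * ∑ i, (1 / (2 * L)) * ‖gradient F y - v i‖ ^ 2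
      ≤ F xt - F y - ⟪gradient F y, xt - y⟫ :=
  svrg_variance_bound_general d n L hL f hconv hdiff hlip F hF y xt v hv
end

section
/- Let d = B·Ω with B, Ω positive integers and let n ≥ 1. Let f_1,…,f_n : ℝ^d → ℝ be convex differentiable functions that are L-smooth (L > 0), set F = (1/n)Σ_i f_i, and assume F is L_B-block-smooth with respect to the block partition. Let P : ℝ^d → ℝ be block-separable, convex, and μ-strongly convex (μ ≥ 0). Let α_1, α_2, α_3 > 0 with α_1 + α_2 + α_3 = 1, and set L̄ = L/(B α_3) + L_B, η = 1/(L̄ α_2 B), ρ = α_2² B² L̄ + (B−1) μ α_2, θ = 1 + μ α_2 / ρ. Fix x', z', x̃, x⋆ ∈ ℝ^d and set y = α_1 x' + α_2 z' + α_3 x̃. For each i ∈ {1,…,n} let v_i = ∇F(x̃) + ∇f_i(y) − ∇f_i(x̃), let z̃_i minimize z ↦ (1/(2η))‖z − (z' − η v_i)‖² + P(z) over ℝ^d, and for each block l define z_{i,l} ∈ ℝ^d by [z_{i,l}]_l = [z̃_i]_l and [z_{i,l}]_{l'} = [z']_{l'} for l' ≠ l, and x_{i,l} = y + α_2 B (z_{i,l}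 − z'). Then (1/(nB)) Σ_{i,l} F(x_{i,l}) + (α_2/n) Σ_i P(z̃_i) + α_3 P(x̃) + θ·(ρ/2)·(1/(nB)) Σ_{i,l} ‖x⋆ − z_{i,l}‖² ≤ α_1 F(x') + α_3 (F(x̃) + P(x̃)) + α_2 (F(x⋆) + P(x⋆)) + (ρ/2) ‖x⋆ − z'‖². -/
open scoped RealInnerProductSpace

/-- The `l`-th block of a vector in `ℝ^d` with `d = B·Ω`. -/
noncomputable def blockOf {B Ω : ℕ} (x : EuclideanSpace ℝ (Fin B × Fin Ω)) (l : Fin B) :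
    EuclideanSpace ℝ (Fin Ω) := WithLp.toLp 2 (fun o => x (l, o))

/-!
For a fixed sample `i`, block smoothness of `F` bounds `∑ₗ F(x_{i,l})` by `B·F(y)` plus a linear
and a quadratic term in `z̃ᵢ - z'`, because the block updates `z_{i,l} - z'` add up to `z̃ᵢ - z'`.
The three-point inequality of the proximal step together with Young's inequality absorbs both
terms, at the price of the variance term `‖∇F(y) - vᵢ‖²`; the step size `η` is chosen exactly so
that the quadratic terms cancel. Averaged over `i`, the estimator `vᵢ` is unbiased and, by
co-coercivity of the `∇fᵢ`, its variance is at most `2L (F(x̃) - F(y) - ⟪∇F(y), x̃ - y⟫)`.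
Convexity of `F` at the coupling point `y = α₁x' + α₂z' + α₃x̃` turns the remaining gradient terms
into `α₁F(x') + α₂F(x⋆) + α₃F(x̃)`. Finally `∑ₗ ‖x⋆ - z_{i,l}‖² = (B-1)‖x⋆ - z'‖² + ‖x⋆ - z̃ᵢ‖²`,
which is where the factor `θ` comes from.
-/

open Set Finset Filter Topology

section Convex

variable {E : Type*} [NormedAddCommGroup E] [InnerProductSpace ℝ E] [CompleteSpace E]

theorem ConvexOn.inner_gradient_le_sub {f : E → ℝ} (hf : ConvexOn ℝ univ f) {x : E}
    (hd : DifferentiableAt ℝ f x) (u : E) : ⟪gradient f x, u - x⟫ ≤ f u - f x := by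
  have hline : ConvexOn ℝ univ (f ∘ AffineMap.lineMap (k := ℝ) x u) := by
    simpa using hf.comp_affineMap (AffineMap.lineMap (k := ℝ) x u)
  have hderiv : HasDerivAt (f ∘ AffineMap.lineMap (k := ℝ) x u) ⟪gradient f x, u - x⟫ 0 := by
    have hfd : HasFDerivAt f (InnerProductSpace.toDual ℝ E (gradient f x))
        (AffineMap.lineMap (k := ℝ) x u 0) := by
      simpa using hd.hasGradientAt.hasFDerivAt
    simpa using hfd.comp_hasDerivAt (0 : ℝ) AffineMap.hasDerivAt_lineMap
  simpa [slope_def_field] using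
    hline.le_slope_of_hasDerivAt (mem_univ 0) (mem_univ 1) one_pos hderiv

theorem ConvexOn.nonneg_of_quadratic_upper_bound {f : E → ℝ} (hf : ConvexOn ℝ univ f)
    {x : E} (hd : DifferentiableAt ℝ f x) {c : ℝ} {h : E} (hh : h ≠ 0)
    (hsm : f (x + h) ≤ f x + ⟪gradient f x, h⟫ + c / 2 * ‖h‖ ^ 2) : 0 ≤ c := by
  have := hf.inner_gradient_le_sub hd (x + h)
  rw [add_sub_cancel_left] at this
  have : 0 < ‖h‖ ^ 2 := by positivity
  nlinarith

theorem ConvexOn.norm_gradient_sub_sq_le {f : E → ℝ} (hf : ConvexOn ℝ univ f)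
    (hd : Differentiable ℝ f) {L : ℝ} (hL : 0 < L)
    (hsm : ∀ x v : E, f (x + v) ≤ f x + ⟪gradient f x, v⟫ + L / 2 * ‖v‖ ^ 2) (a b : E) :
    ‖gradient f a - gradient f b‖ ^ 2 ≤ 2 * L * (f b - f a - ⟪gradient f a, b - a⟫) := by
  set G := gradient f b - gradient f a
  have hlow := hf.inner_gradient_le_sub (hd a) (b - L⁻¹ • G)
  have hup := hsm b (-(L⁻¹ • G))
  rw [← sub_eq_add_neg] at hup
  have e1 : b - L⁻¹ • G - a = (b - a) - L⁻¹ • G := by abel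
  have e2 : gradient f b = G + gradient f a := (sub_add_cancel _ _).symm
  have e3 : L / 2 * (L⁻¹ * ‖G‖) ^ 2 = L⁻¹ * ‖G‖ ^ 2 / 2 := by field_simp
  rw [e1, inner_sub_right, real_inner_smul_right] at hlow
  rw [inner_neg_right, real_inner_smul_right, e2, inner_add_left, real_inner_self_eq_norm_sq,
    norm_neg, norm_smul, Real.norm_eq_abs, abs_inv, abs_of_pos hL, e3] at hup
  have e4 : ‖G‖ ^ 2 = 2 * L * (L⁻¹ * ‖G‖ ^ 2 / 2) := by field_simp
  rw [norm_sub_rev, e4]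
  gcongr
  linarith

theorem ConvexOn.linear_coupling_le {F : E → ℝ} (hF : ConvexOn ℝ univ F) {y : E}
    (hd : DifferentiableAt ℝ F y)
    {α1 α2 α3 : ℝ} (hα1 : 0 ≤ α1) (hα2 : 0 ≤ α2) (hsum : α1 + α2 + α3 = 1)
    {x' z' x xs : E} (hy : y = α1 • x' + α2 • z' + α3 • x) :
    F y + α2 * ⟪gradient F y, xs - z'⟫
      ≤ α1 * F x' + α2 * F xs + α3 * (F y + ⟪gradient F y, x - y⟫) := by
  have hsplit : α2 • (xs - z') = α1 • (x' - y) + α2 • (xs - y) + α3 • (x - y) := by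
    have : y = (α1 + α2 + α3) • y := by rw [hsum, one_smul]
    calc α2 • (xs - z') = α1 • x' + α2 • xs + α3 • x - (α1 + α2 + α3) • y := by
          rw [← this, hy]; module
      _ = _ := by module
  have hinner := congrArg (⟪gradient F y, ·⟫) hsplit
  simp only [inner_add_right, real_inner_smul_right] at hinner
  have h1 := mul_le_mul_of_nonneg_left (hF.inner_gradient_le_sub hd x') hα1
  have h2 := mul_le_mul_of_nonneg_left (hF.inner_gradient_le_sub hd xs) hα2
  linear_combination hinner + h1 + h2 - F y * hsum

end Convex

section Hilbert

variable {E : Type*} [NormedAddCommGroup E] [InnerProductSpace ℝ E]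

theorem real_inner_le_young {c : ℝ} (hc : 0 < c) (a b : E) :
    ⟪a, b⟫ ≤ c / 2 * ‖a‖ ^ 2 + 1 / (2 * c) * ‖b‖ ^ 2 := by
  have h := norm_sub_sq_real (c • a) b
  rw [norm_smul, Real.norm_eq_abs, abs_of_pos hc, real_inner_smul_left] at h
  have key : 2 * c * ⟪a, b⟫ ≤ 2 * c * (c / 2 * ‖a‖ ^ 2 + 1 / (2 * c) * ‖b‖ ^ 2) := by
    field_simp
    nlinarith [sq_nonneg ‖c • a - b‖]
  exact le_of_mul_le_mul_left key (by positivity)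

theorem Finset.sum_norm_sub_sq_le_sum_norm_sq {ι : Type*} (s : Finset ι) (g : ι → E) {m : E}
    (hm : ∑ i ∈ s, g i = (#s : ℝ) • m) :
    ∑ i ∈ s, ‖g i - m‖ ^ 2 ≤ ∑ i ∈ s, ‖g i‖ ^ 2 := by
  have hexpand : ∑ i ∈ s, ‖g i - m‖ ^ 2 = ∑ i ∈ s, ‖g i‖ ^ 2 - (#s : ℝ) * ‖m‖ ^ 2 := by
    simp only [norm_sub_sq_real, sum_add_distrib, sum_sub_distrib, ← sum_inner, hm,
      real_inner_smul_left, real_inner_self_eq_norm_sq, sum_const, nsmul_eq_mul, ← Finset.mul_sum]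
    ring
  rw [hexpand]
  have : 0 ≤ (#s : ℝ) * ‖m‖ ^ 2 := by positivity
  linarith

theorem StrongConvexOn.prox_first_order {P : E → ℝ} {μ : ℝ} (hP : StrongConvexOn univ μ P)
    {η : ℝ} (hη : 0 < η) {c z : E}
    (hmin : ∀ w, 1 / (2 * η) * ‖z - c‖ ^ 2 + P z ≤ 1 / (2 * η) * ‖w - c‖ ^ 2 + P w) (u : E) :
    P z + μ / 2 * ‖u - z‖ ^ 2 ≤ P u + η⁻¹ * ⟪z - c, u - z⟫ := by
  set K := P u + η⁻¹ * ⟪z - c, u - z⟫ - P z - μ / 2 * ‖u - z‖ ^ 2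
  set M := (η⁻¹ + μ) / 2 * ‖u - z‖ ^ 2
  -- compare `z` with the competitor `z + t • (u - z)` and let `t → 0⁺`
  have hsmall : ∀ t ∈ Ioo (0 : ℝ) 1, 0 ≤ K + t * M := by
    rintro t ⟨ht0, ht1⟩
    have hw : (1 - t) • z + t • u - c = (z - c) + t • (u - z) := by module
    have hm := hmin ((1 - t) • z + t • u)
    rw [hw, norm_add_sq_real, real_inner_smul_right, norm_smul, Real.norm_eq_abs,
      abs_of_pos ht0] at hm
    have hc := hP.2 (mem_univ z) (mem_univ u) (sub_nonneg.2 ht1.le) ht0.le (by ring)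
    rw [smul_eq_mul, smul_eq_mul, norm_sub_rev z u] at hc
    have : 0 ≤ t * (K + t * M) := by
      simp only [K, M]
      field_simp at hm ⊢
      nlinarith
    exact nonneg_of_mul_nonneg_right (by linarith) ht0
  have hlim : Tendsto (fun t : ℝ => K + t * M) (𝓝[>] 0) (𝓝 K) := by
    have hcont : Continuous fun t : ℝ => K + t * M := by fun_prop
    simpa only [zero_mul, add_zero] using (hcont.tendsto 0).mono_left nhdsWithin_le_nhds
  have : 0 ≤ K := ge_of_tendsto hlim <| by
    filter_upwards [Ioo_mem_nhdsGT one_pos] with t ht using hsmall t ht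
  simp only [K] at this
  linarith

theorem StrongConvexOn.prox_three_point {P : E → ℝ} {μ : ℝ} (hP : StrongConvexOn univ μ P)
    {η : ℝ} (hη : 0 < η) {z' v z : E}
    (hmin : ∀ w, 1 / (2 * η) * ‖z - (z' - η • v)‖ ^ 2 + P z
      ≤ 1 / (2 * η) * ‖w - (z' - η • v)‖ ^ 2 + P w) (u : E) :
    P z + (η⁻¹ + μ) / 2 * ‖u - z‖ ^ 2 + η⁻¹ / 2 * ‖z - z'‖ ^ 2
      ≤ P u + η⁻¹ / 2 * ‖u - z'‖ ^ 2 + ⟪v, u - z⟫ := by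
  have h := hP.prox_first_order hη hmin u
  have hpol : ‖u - z'‖ ^ 2 = ‖z - z'‖ ^ 2 + 2 * ⟪z - z', u - z⟫ + ‖u - z‖ ^ 2 := by
    rw [← norm_add_sq_real, sub_add_sub_cancel']
  have hsplit : z - (z' - η • v) = (z - z') + η • v := by abel
  rw [hsplit, inner_add_left, real_inner_smul_left, mul_add, ← mul_assoc,
    inv_mul_cancel₀ hη.ne', one_mul] at h
  rw [hpol]
  linarith

end Hilbert

section Average

variable {ι : Type*} [Fintype ι] {E : Type*} {f : ι → E → ℝ} {F : E → ℝ}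

theorem sum_eq_card_mul [Nonempty ι] (hF : ∀ x, F x = 1 / Fintype.card ι * ∑ i, f i x) (x : E) :
    ∑ i, f i x = Fintype.card ι * F x := by
  rw [hF, ← mul_assoc, mul_one_div_cancel (by positivity), one_mul]

theorem convexOn_average [AddCommMonoid E] [Module ℝ E] (hconv : ∀ i, ConvexOn ℝ univ (f i))
    (hF : ∀ x, F x = 1 / Fintype.card ι * ∑ i, f i x) : ConvexOn ℝ univ F := by
  refine ⟨convex_univ, fun x _ y _ a b ha hb hab => ?_⟩
  have hsum : ∑ i, f i (a • x + b • y) ≤ a * ∑ i, f i x + b * ∑ i, f i y := by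
    rw [mul_sum, mul_sum, ← sum_add_distrib]
    exact sum_le_sum fun i _ => (hconv i).2 (mem_univ x) (mem_univ y) ha hb hab
  simp only [hF, smul_eq_mul]
  have := mul_le_mul_of_nonneg_left hsum (by positivity : (0 : ℝ) ≤ 1 / Fintype.card ι)
  linarith

variable [NormedAddCommGroup E] [InnerProductSpace ℝ E] [CompleteSpace E]

theorem hasGradientAt_average (hdiff : ∀ i, Differentiable ℝ (f i))
    (hF : ∀ x, F x = 1 / Fintype.card ι * ∑ i, f i x) (x : E) :
    HasGradientAt F ((1 / Fintype.card ι : ℝ) • ∑ i, gradient (f i) x) x := by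
  have hFeq : F = fun x => 1 / Fintype.card ι * ∑ i, f i x := funext hF
  have hsum := (HasFDerivAt.fun_sum (u := univ) fun i _ => (hdiff i x).hasFDerivAt).const_mul
    (1 / Fintype.card ι : ℝ)
  rw [← hFeq] at hsum
  convert hsum.hasGradientAt
  simp [map_sum, gradient]

variable [Nonempty ι]

theorem sum_gradient_eq_card_smul (hdiff : ∀ i, Differentiable ℝ (f i))
    (hF : ∀ x, F x = 1 / Fintype.card ι * ∑ i, f i x) (x : E) :
    ∑ i, gradient (f i) x = (Fintype.card ι : ℝ) • gradient F x := by
  rw [(hasGradientAt_average hdiff hF x).gradient, smul_smul, mul_one_div_cancel (by positivity),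
    one_smul]

theorem sum_norm_sub_svrg_sq_le (hconv : ∀ i, ConvexOn ℝ univ (f i))
    (hdiff : ∀ i, Differentiable ℝ (f i)) {L : ℝ} (hL : 0 < L)
    (hsmooth : ∀ i x v, f i (x + v) ≤ f i x + ⟪gradient (f i) x, v⟫ + L / 2 * ‖v‖ ^ 2)
    (hF : ∀ x, F x = 1 / Fintype.card ι * ∑ i, f i x) (y x : E) :
    ∑ i, ‖gradient F y - (gradient F x + gradient (f i) y - gradient (f i) x)‖ ^ 2
      ≤ 2 * L * Fintype.card ι * (F x - F y - ⟪gradient F y, x - y⟫) := by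
  have hmean : ∑ i, (gradient (f i) y - gradient (f i) x)
      = (#(univ : Finset ι) : ℝ) • (gradient F y - gradient F x) := by
    rw [sum_sub_distrib, card_univ, smul_sub, sum_gradient_eq_card_smul hdiff hF,
      sum_gradient_eq_card_smul hdiff hF]
  calc ∑ i, ‖gradient F y - (gradient F x + gradient (f i) y - gradient (f i) x)‖ ^ 2
      = ∑ i, ‖(gradient (f i) y - gradient (f i) x) - (gradient F y - gradient F x)‖ ^ 2 := by
        congr! 2 with i
        rw [← norm_neg]
        congr 1
        abel
    _ ≤ ∑ i, ‖gradient (f i) y - gradient (f i) x‖ ^ 2 :=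
        Finset.sum_norm_sub_sq_le_sum_norm_sq _ _ hmean
    _ ≤ ∑ i, 2 * L * (f i x - f i y - ⟪gradient (f i) y, x - y⟫) :=
        sum_le_sum fun i _ => (hconv i).norm_gradient_sub_sq_le (hdiff i) hL (hsmooth i) y x
    _ = 2 * L * Fintype.card ι * (F x - F y - ⟪gradient F y, x - y⟫) := by
        rw [← mul_sum, sum_sub_distrib, sum_sub_distrib, ← sum_inner,
          sum_gradient_eq_card_smul hdiff hF, real_inner_smul_left, sum_eq_card_mul hF,
          sum_eq_card_mul hF]
        ring

end Average

section Blocks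

variable {β κ : Type*} [DecidableEq β]

noncomputable def blockUpdate (z' z : EuclideanSpace ℝ (β × κ)) (l : β) :
    EuclideanSpace ℝ (β × κ) :=
  WithLp.toLp 2 fun p => if p.1 = l then z p else z' p

@[simp]
theorem blockUpdate_apply (z' z : EuclideanSpace ℝ (β × κ)) (l : β) (p : β × κ) :
    blockUpdate z' z l p = if p.1 = l then z p else z' p := rfl

variable [Fintype β]

theorem Fintype.sum_ite_eq_add_card_sub_one_mul (i : β) (a b : ℝ) :
    ∑ l, (if i = l then a else b) = a + (Fintype.card β - 1) * b := by
  have : ∀ l, (if i = l then a else b) = (if i = l then a - b else 0) + b := by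
    intro l; split_ifs <;> ring
  simp only [this, sum_add_distrib, sum_ite_eq, sum_const, card_univ, nsmul_eq_mul]
  ring

theorem sum_blockUpdate_sub (z' z : EuclideanSpace ℝ (β × κ)) :
    ∑ l, (blockUpdate z' z l - z') = z - z' := by
  ext p
  simp [WithLp.ofLp_sum, Fintype.sum_ite_eq_add_card_sub_one_mul]
  ring

variable [Fintype κ]

theorem sum_norm_sub_blockUpdate_sq (x z' z : EuclideanSpace ℝ (β × κ)) :
    ∑ l, ‖x - blockUpdate z' z l‖ ^ 2 = (Fintype.card β - 1) * ‖x - z'‖ ^ 2 + ‖x - z‖ ^ 2 := by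
  simp only [EuclideanSpace.real_norm_sq_eq, PiLp.sub_apply, blockUpdate_apply, apply_ite,
    ite_pow]
  rw [sum_comm, mul_sum, ← sum_add_distrib]
  refine sum_congr rfl fun p _ => ?_
  rw [Fintype.sum_ite_eq_add_card_sub_one_mul]
  ring

theorem sum_norm_blockUpdate_sub_sq (z' z : EuclideanSpace ℝ (β × κ)) :
    ∑ l, ‖blockUpdate z' z l - z'‖ ^ 2 = ‖z - z'‖ ^ 2 := by
  simpa [norm_sub_rev] using sum_norm_sub_blockUpdate_sq z' z' z

theorem sum_blockUpdate_step_le_of_blockSmooth {F : EuclideanSpace ℝ (β × κ) → ℝ} {LB : ℝ}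
    (hFblock : ∀ (l : β) (x h : EuclideanSpace ℝ (β × κ)), (∀ p : β × κ, p.1 ≠ l → h p = 0) →
      F (x + h) ≤ F x + ⟪gradient F x, h⟫ + LB / 2 * ‖h‖ ^ 2)
    (a : ℝ) (y z' z : EuclideanSpace ℝ (β × κ)) :
    ∑ l, F (y + a • (blockUpdate z' z l - z'))
      ≤ Fintype.card β * F y + a * ⟪gradient F y, z - z'⟫ + LB / 2 * a ^ 2 * ‖z - z'‖ ^ 2 := by
  have hblock : ∀ l, ∀ p : β × κ, p.1 ≠ l → (a • (blockUpdate z' z l - z')) p = 0 := by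
    intro l p hp
    simp [hp]
  calc ∑ l, F (y + a • (blockUpdate z' z l - z'))
      ≤ ∑ l, (F y + ⟪gradient F y, a • (blockUpdate z' z l - z')⟫
          + LB / 2 * ‖a • (blockUpdate z' z l - z')‖ ^ 2) :=
        sum_le_sum fun l _ => hFblock l y _ (hblock l)
    _ = _ := by
        simp only [sum_add_distrib, sum_const, card_univ, nsmul_eq_mul, ← inner_sum,
          sum_blockUpdate_sub, real_inner_smul_right, norm_smul, mul_pow, Real.norm_eq_abs,
          sq_abs, ← mul_sum, sum_norm_blockUpdate_sub_sq]
        ring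

theorem blockSmooth_const_nonneg [Nonempty β] [Nonempty κ] {F : EuclideanSpace ℝ (β × κ) → ℝ}
    (hF : ConvexOn ℝ univ F) (hd : Differentiable ℝ F) {LB : ℝ}
    (hFblock : ∀ (l : β) (x h : EuclideanSpace ℝ (β × κ)), (∀ p : β × κ, p.1 ≠ l → h p = 0) →
      F (x + h) ≤ F x + ⟪gradient F x, h⟫ + LB / 2 * ‖h‖ ^ 2) : 0 ≤ LB := by
  classical
  obtain ⟨l⟩ := ‹Nonempty β›
  obtain ⟨o⟩ := ‹Nonempty κ›
  refine hF.nonneg_of_quadratic_upper_bound (hd 0) (h := EuclideanSpace.single (l, o) 1) ?_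
    (hFblock l 0 _ fun p hp => ?_)
  · simp
  · simp only [PiLp.single_apply, ite_eq_right_iff, one_ne_zero, imp_false]
    rintro rfl
    exact hp rfl

end Blocks

section ADSG

variable {β κ : Type*} [Fintype β] [DecidableEq β] [Nonempty β] [Fintype κ]

theorem adsg_block_step_le {F P : EuclideanSpace ℝ (β × κ) → ℝ} {LB μ η a c : ℝ}
    (hFblock : ∀ (l : β) (x h : EuclideanSpace ℝ (β × κ)), (∀ p : β × κ, p.1 ≠ l → h p = 0) →
      F (x + h) ≤ F x + ⟪gradient F x, h⟫ + LB / 2 * ‖h‖ ^ 2)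
    (hP : StrongConvexOn univ μ P) (hη : 0 < η) (ha : 0 ≤ a) (hc : 0 < c)
    (hstep : a * (LB + 1 / (c * Fintype.card β)) ≤ η⁻¹) {y z' v z : EuclideanSpace ℝ (β × κ)}
    (hmin : ∀ w, 1 / (2 * η) * ‖z - (z' - η • v)‖ ^ 2 + P z
      ≤ 1 / (2 * η) * ‖w - (z' - η • v)‖ ^ 2 + P w)
    (xs : EuclideanSpace ℝ (β × κ)) :
    ∑ l, F (y + a • (blockUpdate z' z l - z')) + a * P z + a * (η⁻¹ + μ) / 2 * ‖xs - z‖ ^ 2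
      ≤ Fintype.card β * F y + a * ⟪v, xs - z'⟫
        + Fintype.card β * c / 2 * ‖gradient F y - v‖ ^ 2
        + a * P xs + a * η⁻¹ / 2 * ‖xs - z'‖ ^ 2 := by
  set B : ℝ := (Fintype.card β : ℝ)
  have hB : 0 < B := by positivity
  have hdescent := sum_blockUpdate_step_le_of_blockSmooth hFblock a y z' z
  have hprox := mul_le_mul_of_nonneg_left (hP.prox_three_point hη hmin xs) ha
  have hyoung : a * ⟪gradient F y - v, z - z'⟫
      ≤ B * c / 2 * ‖gradient F y - v‖ ^ 2 + a ^ 2 / (2 * c * B) * ‖z - z'‖ ^ 2 := by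
    have h := real_inner_le_young hc (gradient F y - v) ((a / B) • (z - z'))
    rw [real_inner_smul_right, norm_smul, mul_pow, Real.norm_eq_abs, sq_abs] at h
    calc a * ⟪gradient F y - v, z - z'⟫ = B * (a / B * ⟪gradient F y - v, z - z'⟫) := by
          field_simp
      _ ≤ B * (c / 2 * ‖gradient F y - v‖ ^ 2 + 1 / (2 * c) * ((a / B) ^ 2 * ‖z - z'‖ ^ 2)) := by
          gcongr
      _ = _ := by field_simp
  have hcoef : (LB / 2 * a ^ 2 + a ^ 2 / (2 * c * B)) * ‖z - z'‖ ^ 2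
      ≤ a * η⁻¹ / 2 * ‖z - z'‖ ^ 2 := by
    refine mul_le_mul_of_nonneg_right ?_ (sq_nonneg _)
    have := mul_le_mul_of_nonneg_left hstep ha
    field_simp at this ⊢
    linarith
  have hsplit : ⟪gradient F y, z - z'⟫ + ⟪v, xs - z⟫
      = ⟪gradient F y - v, z - z'⟫ + ⟪v, xs - z'⟫ := by
    rw [inner_sub_left, ← sub_add_sub_cancel xs z z', inner_add_right]
    ring
  linear_combination hdescent + hprox + hyoung + hcoef + a * hsplit

theorem adsg_sample_average_le {ι : Type*} [Fintype ι] [Nonempty ι]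
    {f : ι → EuclideanSpace ℝ (β × κ) → ℝ} {F P : EuclideanSpace ℝ (β × κ) → ℝ}
    {L LB μ η α1 α2 α3 : ℝ}
    (hconv : ∀ i, ConvexOn ℝ univ (f i)) (hdiff : ∀ i, Differentiable ℝ (f i)) (hL : 0 < L)
    (hsmooth : ∀ i x v, f i (x + v) ≤ f i x + ⟪gradient (f i) x, v⟫ + L / 2 * ‖v‖ ^ 2)
    (hF : ∀ x, F x = 1 / Fintype.card ι * ∑ i, f i x)
    (hFblock : ∀ (l : β) (x h : EuclideanSpace ℝ (β × κ)), (∀ p : β × κ, p.1 ≠ l → h p = 0) →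
      F (x + h) ≤ F x + ⟪gradient F x, h⟫ + LB / 2 * ‖h‖ ^ 2)
    (hP : StrongConvexOn univ μ P)
    (hα1 : 0 ≤ α1) (hα2 : 0 ≤ α2) (hα3 : 0 < α3) (hsum : α1 + α2 + α3 = 1) (hη : 0 < η)
    (hstep : α2 * Fintype.card β * (LB + L / (Fintype.card β * α3)) ≤ η⁻¹)
    {x' z' xt y : EuclideanSpace ℝ (β × κ)} (hy : y = α1 • x' + α2 • z' + α3 • xt)
    {v zt : ι → EuclideanSpace ℝ (β × κ)}
    (hv : ∀ i, v i = gradient F xt + gradient (f i) y - gradient (f i) xt)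
    (hzt : ∀ i w, 1 / (2 * η) * ‖zt i - (z' - η • v i)‖ ^ 2 + P (zt i)
      ≤ 1 / (2 * η) * ‖w - (z' - η • v i)‖ ^ 2 + P w)
    (xs : EuclideanSpace ℝ (β × κ)) :
    ∑ i, ∑ l, F (y + (α2 * Fintype.card β) • (blockUpdate z' (zt i) l - z'))
        + α2 * Fintype.card β * ∑ i, P (zt i)
        + α2 * Fintype.card β * (η⁻¹ + μ) / 2 * ∑ i, ‖xs - zt i‖ ^ 2
      ≤ Fintype.card ι * Fintype.card β * (α1 * F x' + α3 * F xt + α2 * (F xs + P xs))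
        + Fintype.card ι * (α2 * Fintype.card β * η⁻¹ / 2) * ‖xs - z'‖ ^ 2 := by
  set B : ℝ := (Fintype.card β : ℝ) with hBdef
  set N : ℝ := (Fintype.card ι : ℝ) with hNdef
  have hstep' : α2 * B * (LB + 1 / (α3 / L * B)) ≤ η⁻¹ := by
    rwa [show 1 / (α3 / L * B) = L / (B * α3) by field_simp]
  have hsamples := sum_le_sum (s := univ) fun i _ =>
    adsg_block_step_le (y := y) hFblock hP hη (by positivity) (div_pos hα3 hL) hstep' (hzt i) xs
  have hsumv : ∑ i, v i = N • gradient F y := by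
    simp only [hv, sum_sub_distrib, sum_add_distrib, sum_const, card_univ,
      sum_gradient_eq_card_smul hdiff hF, ← Nat.cast_smul_eq_nsmul ℝ]
    abel
  have hvar : B * (α3 / L) / 2 * ∑ i, ‖gradient F y - v i‖ ^ 2
      ≤ N * B * α3 * (F xt - F y - ⟪gradient F y, xt - y⟫) := by
    have h := sum_norm_sub_svrg_sq_le hconv hdiff hL hsmooth hF y xt
    simp only [← hv] at h
    calc B * (α3 / L) / 2 * ∑ i, ‖gradient F y - v i‖ ^ 2
        ≤ B * (α3 / L) / 2 * (2 * L * N * (F xt - F y - ⟪gradient F y, xt - y⟫)) := by gcongr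
      _ = _ := by field_simp
  have hcoupling := mul_le_mul_of_nonneg_left
    ((convexOn_average hconv hF).linear_coupling_le
      (hasGradientAt_average hdiff hF y).differentiableAt hα1 hα2 hsum hy (xs := xs))
    (by positivity : 0 ≤ N * B)
  simp only [sum_add_distrib, sum_const, card_univ, nsmul_eq_mul, ← mul_sum, ← sum_inner,
    hsumv, real_inner_smul_left, ← hBdef, ← hNdef] at hsamples
  linear_combination hsamples + hvar + hcoupling

theorem adsg_parameters {B L LB μ α2 α3 Lbar η ρ θ : ℝ} (hB : 1 ≤ B) (hL : 0 < L) (hLB : 0 ≤ LB)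
    (hμ : 0 ≤ μ) (hα2 : 0 < α2) (hα3 : 0 < α3) (hLbar : Lbar = L / (B * α3) + LB)
    (hη : η = 1 / (Lbar * α2 * B)) (hρ : ρ = α2 ^ 2 * B ^ 2 * Lbar + (B - 1) * μ * α2)
    (hθ : θ = 1 + μ * α2 / ρ) :
    0 < η ∧ η⁻¹ = α2 * B * (LB + L / (B * α3)) ∧ ρ = α2 * B * η⁻¹ + (B - 1) * μ * α2 ∧
      θ * (ρ / 2) = α2 * B * (η⁻¹ + μ) / 2 := by
  have hηinv : η⁻¹ = Lbar * α2 * B := by rw [hη, one_div, inv_inv]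
  have hρ' : ρ = α2 * B * η⁻¹ + (B - 1) * μ * α2 := by rw [hρ, hηinv]; ring
  have hρ0 : 0 < ρ := by
    have := sub_nonneg.2 hB
    rw [hρ, hLbar]
    positivity
  have hθρ : θ * ρ = ρ + μ * α2 := by rw [hθ, add_mul, div_mul_cancel₀ _ hρ0.ne', one_mul]
  refine ⟨by rw [hη, hLbar]; positivity, by rw [hηinv, hLbar]; ring, hρ', ?_⟩
  linear_combination hθρ / 2 + hρ' / 2

end ADSG

theorem adsg_one_iteration_general
    (B Ω n : ℕ) (hB : 0 < B) (hΩ : 0 < Ω) (hn : 1 ≤ n)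
    (L LB μ : ℝ) (hL : 0 < L) (hμ : 0 ≤ μ)
    (f : Fin n → EuclideanSpace ℝ (Fin B × Fin Ω) → ℝ)
    (hconv : ∀ i, ConvexOn ℝ Set.univ (f i))
    (hdiff : ∀ i, Differentiable ℝ (f i))
    (hsmooth : ∀ (i : Fin n) (x v : EuclideanSpace ℝ (Fin B × Fin Ω)),
      f i (x + v) ≤ f i x + ⟪gradient (f i) x, v⟫ + L / 2 * ‖v‖ ^ 2)
    (F : EuclideanSpace ℝ (Fin B × Fin Ω) → ℝ)
    (hF : ∀ x, F x = (1 / (n : ℝ)) * ∑ i, f i x)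
    (hFblock : ∀ (l : Fin B) (x h : EuclideanSpace ℝ (Fin B × Fin Ω)),
      (∀ p : Fin B × Fin Ω, p.1 ≠ l → h p = 0) →
      F (x + h) ≤ F x + ⟪gradient F x, h⟫ + LB / 2 * ‖h‖ ^ 2)
    (P : EuclideanSpace ℝ (Fin B × Fin Ω) → ℝ)
    (hPsc : StrongConvexOn Set.univ μ P)
    (α1 α2 α3 : ℝ) (hα1 : 0 < α1) (hα2 : 0 < α2) (hα3 : 0 < α3)
    (hsum : α1 + α2 + α3 = 1)
    (Lbar η ρ θ : ℝ)
    (hLbar : Lbar = L / ((B : ℝ) * α3) + LB)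
    (hη : η = 1 / (Lbar * α2 * (B : ℝ)))
    (hρ : ρ = α2 ^ 2 * (B : ℝ) ^ 2 * Lbar + ((B : ℝ) - 1) * μ * α2)
    (hθ : θ = 1 + μ * α2 / ρ)
    (x' z' xt xs : EuclideanSpace ℝ (Fin B × Fin Ω))
    (y : EuclideanSpace ℝ (Fin B × Fin Ω)) (hy : y = α1 • x' + α2 • z' + α3 • xt)
    (v : Fin n → EuclideanSpace ℝ (Fin B × Fin Ω))
    (hv : ∀ i, v i = gradient F xt + gradient (f i) y - gradient (f i) xt)
    (zt : Fin n → EuclideanSpace ℝ (Fin B × Fin Ω))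
    (hzt : ∀ (i : Fin n) (u : EuclideanSpace ℝ (Fin B × Fin Ω)),
      1 / (2 * η) * ‖zt i - (z' - η • v i)‖ ^ 2 + P (zt i)
        ≤ 1 / (2 * η) * ‖u - (z' - η • v i)‖ ^ 2 + P u)
    (zil : Fin n → Fin B → EuclideanSpace ℝ (Fin B × Fin Ω))
    (hzil : ∀ (i : Fin n) (l : Fin B) (p : Fin B × Fin Ω),
      zil i l p = if p.1 = l then zt i p else z' p)
    (xil : Fin n → Fin B → EuclideanSpace ℝ (Fin B × Fin Ω))
    (hxil : ∀ i l, xil i l = y + (α2 * (B : ℝ)) • (zil i l - z')) :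
    (1 / ((n : ℝ) * (B : ℝ))) * (∑ i, ∑ l, F (xil i l))
        + (α2 / (n : ℝ)) * ∑ i, P (zt i) + α3 * P xt
        + θ * (ρ / 2) * ((1 / ((n : ℝ) * (B : ℝ))) * ∑ i, ∑ l, ‖xs - zil i l‖ ^ 2)
      ≤ α1 * F x' + α3 * (F xt + P xt) + α2 * (F xs + P xs) + ρ / 2 * ‖xs - z'‖ ^ 2 := by
  have : Nonempty (Fin B) := ⟨⟨0, hB⟩⟩
  have : Nonempty (Fin Ω) := ⟨⟨0, hΩ⟩⟩
  have : Nonempty (Fin n) := ⟨⟨0, hn⟩⟩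
  have hF' : ∀ x, F x = 1 / Fintype.card (Fin n) * ∑ i, f i x := by simpa using hF
  have hLB : 0 ≤ LB := blockSmooth_const_nonneg (convexOn_average hconv hF')
    (fun x => (hasGradientAt_average hdiff hF' x).differentiableAt) hFblock
  obtain ⟨hη0, hηinv, hρ', hθρ⟩ :=
    adsg_parameters (by exact_mod_cast hB) hL hLB hμ hα2 hα3 hLbar hη hρ hθ
  have hzil' : ∀ i l, zil i l = blockUpdate z' (zt i) l := fun i l => by ext p; simp [hzil]
  have hmain := adsg_sample_average_le hconv hdiff hL hsmooth hF' hFblock hPsc hα1.le hα2.le hα3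
    hsum hη0 (by rw [hηinv, Fintype.card_fin]) hy hv hzt xs
  have hdist : ∑ i, ∑ l, ‖xs - zil i l‖ ^ 2
      = n * ((B - 1) * ‖xs - z'‖ ^ 2) + ∑ i, ‖xs - zt i‖ ^ 2 := by
    simp [hzil', sum_norm_sub_blockUpdate_sq, sum_add_distrib]
  simp only [Fintype.card_fin, ← hzil', ← hxil] at hmain
  rw [hθρ, hdist]
  have := mul_le_mul_of_nonneg_left hmain (by positivity : (0 : ℝ) ≤ 1 / (n * B))
  linear_combination (norm := skip) this - ‖xs - z'‖ ^ 2 / 2 * hρ'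
  field_simp
  ring_nf
  exact le_rfl

/-- One-iteration inequality (Lemma 2) of the ADSG analysis, with the expectations over
the uniformly random sample `i` and block `l` written as explicit averages. -/
theorem adsg_one_iteration
    (B Ω n : ℕ) (hB : 0 < B) (hΩ : 0 < Ω) (hn : 1 ≤ n)
    (L LB μ : ℝ) (hL : 0 < L) (hμ : 0 ≤ μ)
    (f : Fin n → EuclideanSpace ℝ (Fin B × Fin Ω) → ℝ)
    (hconv : ∀ i, ConvexOn ℝ Set.univ (f i))
    (hdiff : ∀ i, Differentiable ℝ (f i))
    (hsmooth : ∀ (i : Fin n) (x v : EuclideanSpace ℝ (Fin B × Fin Ω)),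
      f i (x + v) ≤ f i x + ⟪gradient (f i) x, v⟫ + L / 2 * ‖v‖ ^ 2)
    (F : EuclideanSpace ℝ (Fin B × Fin Ω) → ℝ)
    (hF : ∀ x, F x = (1 / (n : ℝ)) * ∑ i, f i x)
    (hFblock : ∀ (l : Fin B) (x h : EuclideanSpace ℝ (Fin B × Fin Ω)),
      (∀ p : Fin B × Fin Ω, p.1 ≠ l → h p = 0) →
      F (x + h) ≤ F x + ⟪gradient F x, h⟫ + LB / 2 * ‖h‖ ^ 2)
    (P : EuclideanSpace ℝ (Fin B × Fin Ω) → ℝ)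
    (Pl : Fin B → EuclideanSpace ℝ (Fin Ω) → ℝ)
    (hPsep : ∀ x, P x = ∑ l : Fin B, Pl l (blockOf x l))
    (hPconv : ConvexOn ℝ Set.univ P)
    (hPsc : StrongConvexOn Set.univ μ P)
    (α1 α2 α3 : ℝ) (hα1 : 0 < α1) (hα2 : 0 < α2) (hα3 : 0 < α3)
    (hsum : α1 + α2 + α3 = 1)
    (Lbar η ρ θ : ℝ)
    (hLbar : Lbar = L / ((B : ℝ) * α3) + LB)
    (hη : η = 1 / (Lbar * α2 * (B : ℝ)))
    (hρ : ρ = α2 ^ 2 * (B : ℝ) ^ 2 * Lbar + ((B : ℝ) - 1) * μ * α2)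
    (hθ : θ = 1 + μ * α2 / ρ)
    (x' z' xt xs : EuclideanSpace ℝ (Fin B × Fin Ω))
    (y : EuclideanSpace ℝ (Fin B × Fin Ω)) (hy : y = α1 • x' + α2 • z' + α3 • xt)
    (v : Fin n → EuclideanSpace ℝ (Fin B × Fin Ω))
    (hv : ∀ i, v i = gradient F xt + gradient (f i) y - gradient (f i) xt)
    (zt : Fin n → EuclideanSpace ℝ (Fin B × Fin Ω))
    (hzt : ∀ (i : Fin n) (u : EuclideanSpace ℝ (Fin B × Fin Ω)),
      1 / (2 * η) * ‖zt i - (z' - η • v i)‖ ^ 2 + P (zt i)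
        ≤ 1 / (2 * η) * ‖u - (z' - η • v i)‖ ^ 2 + P u)
    (zil : Fin n → Fin B → EuclideanSpace ℝ (Fin B × Fin Ω))
    (hzil : ∀ (i : Fin n) (l : Fin B) (p : Fin B × Fin Ω),
      zil i l p = if p.1 = l then zt i p else z' p)
    (xil : Fin n → Fin B → EuclideanSpace ℝ (Fin B × Fin Ω))
    (hxil : ∀ i l, xil i l = y + (α2 * (B : ℝ)) • (zil i l - z')) :
    (1 / ((n : ℝ) * (B : ℝ))) * (∑ i, ∑ l, F (xil i l))
        + (α2 / (n : ℝ)) * ∑ i, P (zt i) + α3 * P xt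
        + θ * (ρ / 2) * ((1 / ((n : ℝ) * (B : ℝ))) * ∑ i, ∑ l, ‖xs - zil i l‖ ^ 2)
      ≤ α1 * F x' + α3 * (F xt + P xt) + α2 * (F xs + P xs) + ρ / 2 * ‖xs - z'‖ ^ 2 :=
  adsg_one_iteration_general B Ω n hB hΩ hn L LB μ hL hμ f hconv hdiff hsmooth F hF hFblock P hPsc
    α1 α2 α3 hα1 hα2 hα3 hsum Lbar η ρ θ hLbar hη hρ hθ x' z' xt xs y hy v hv zt hzt zil hzil xil
    hxil
end

section
/- Let d = B·Ω with B, Ω positive integers, n ≥ 1, m ≥ 1. Let f_1,…,f_n : ℝ^d → ℝ be differentiable with F = (1/n)Σ_i f_i, let P be block-separable with blocks P_l : ℝ^Ω → ℝ, let η > 0, and suppose p_l : ℝ^Ω → ℝ^Ω is a map such that for every w ∈ ℝ^Ω, p_l(w) minimizes u ↦ η P_l(u) + (1/2)‖u − w‖² over ℝ^Ω. Let α_1, α_2, α_3 be reals with α_1 + α_2 + α_3 = 1, α_1 ≠ 0, α_2 + α_3 ≠ 0, and set γ = α_2/(α_2 + α_3). Fix a snapshot ẋ ∈ ℝ^d,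 index choices i_1,…,i_m ∈ {1,…,n}, l_1,…,l_m ∈ {1,…,B}, and epoch-start vectors x_0, z_0 ∈ ℝ^d. Define Algorithm I iterates for j = 1,…,m by: y_j = α_1 x_{j−1} + α_2 z_{j−1} + α_3 ẋ; [v_j]_{l_j} = [∇F(ẋ)]_{l_j} + [∇f_{i_j}(y_j) − ∇f_{i_j}(ẋ)]_{l_j}; [z_j]_{l_j} = p_{l_j}([z_{j−1}]_{l_j} − η [v_j]_{l_j}) and [z_j]_{l'} = [z_{j−1}]_{l'} for l' ≠ l_j; x_j = y_j + α_2 B (z_j − z_{j−1}). Define Algorithm II iterates by: ẑ_0 = z_0 − ẋ, u_0 = x_0 − γ ẑ_0 − ẋ, β_{−1} = 1, β_j = α_1 β_{j−1}; for j = 1,…,m: ȳ_j = β_{j−1} u_{j−1} + γ ẑ_{j−1} + ẋ; [v̇_j]_{l_j} = [∇F(ẋ)]_{l_j} + [∇f_{i_j}(ȳ_j) − ∇f_{i_j}(ẋ)]_{l_j}; [ẑ_j]_{l_j} = p_{l_j}([ẑ_{j−1} + ẋ]_{l_j} − η [v̇_j]_{l_j}) − [ẋ]_{l_j} and [ẑ_j]_{l'}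 = [ẑ_{j−1}]_{l'} for l' ≠ l_j; u_j = u_{j−1} + ((α_2 B − γ)/β_{j−1})(ẑ_j − ẑ_{j−1}); and set z̄_j = ẑ_j + ẋ and x̄_j = β_{j−1} u_j + γ ẑ_j + ẋ. Then for all j = 1,…,m: y_j = ȳ_j, z_j = z̄_j, and x_j = x̄_j. -/
/-! Algorithm II runs Algorithm I in shifted coordinates: by induction on `j`,
`ẑ_j = z_j − ẋ` and `x_j = β_{j−1} u_j + γ ẑ_j + ẋ`. Given these at `j − 1`, the points `y_j`
and `ȳ_j` agree because `γ = α₂ / (α₂ + α₃)` is the fixed point of `t ↦ α₁ t + α₂`; equal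
points give equal gradients, hence the same proximal update of block `l_j`; and the update of
`u` is scaled by `1 / β_{j−1}` so that it reproduces the step `α₂ B (z_j − z_{j−1})` of `x`. -/

section Module

variable {K E : Type*} [Field K] [AddCommGroup E] [Module K E]

theorem mul_add_eq_self_of_eq_div {α₁ α₂ α₃ γ : K} (hsum : α₁ + α₂ + α₃ = 1)
    (hα : α₂ + α₃ ≠ 0) (hγ : γ = α₂ / (α₂ + α₃)) : α₁ * γ + α₂ = γ := by
  rw [hγ, show α₁ = 1 - (α₂ + α₃) by linear_combination hsum]
  field_simp
  ring

theorem momentum_point_eq {α₁ α₂ α₃ β γ : K} {x z u w c : E}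
    (hsum : α₁ + α₂ + α₃ = 1) (hγ : α₁ * γ + α₂ = γ) (hx : x = β • u + γ • w + c) (hz : z = w + c) :
    α₁ • x + α₂ • z + α₃ • c = (α₁ * β) • u + γ • w + c := by
  subst hx hz
  linear_combination (norm := module) hγ • w + hsum • c

theorem momentum_step_eq {β γ a : K} (hβ : β ≠ 0) (u w w' c : E) :
    (β • u + γ • w + c) + a • ((w' + c) - (w + c))
      = β • (u + ((a - γ) / β) • (w' - w)) + γ • w' + c := by
  rw [smul_add, smul_smul, mul_div_cancel₀ _ hβ]
  module

end Module

theorem EuclideanSpace.eq_sub_of_block_update {ι κ : Type*}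
    {z z' w w' c : EuclideanSpace ℝ (ι × κ)} {l : ι} (hprev : w = z - c) (hblock : ∀ o, w' (l, o) = z' (l, o) - c (l, o))
    (hrest : ∀ q : ι × κ, q.1 ≠ l → z' q = z q) (hrest' : ∀ q : ι × κ, q.1 ≠ l → w' q = w q) :
    w' = z' - c := by
  ext ⟨l', o⟩
  by_cases hl : l' = l
  · subst hl
    exact hblock o
  · rw [PiLp.sub_apply, hrest' (l', o) hl, hrest (l', o) hl, hprev, PiLp.sub_apply]

theorem adsg_implementation_equiv_general
    (B Ω n m : ℕ)
    (f : Fin n → EuclideanSpace ℝ (Fin B × Fin Ω) → ℝ)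
    (F : EuclideanSpace ℝ (Fin B × Fin Ω) → ℝ)
    (η : ℝ)
    -- the proximal maps of the blocks of `P`
    (p : Fin B → EuclideanSpace ℝ (Fin Ω) → EuclideanSpace ℝ (Fin Ω))
    (α1 α2 α3 γ : ℝ) (hsum : α1 + α2 + α3 = 1) (hα1 : α1 ≠ 0) (hα23 : α2 + α3 ≠ 0)
    (hγ : γ = α2 / (α2 + α3))
    -- snapshot, sample and block choices, epoch-start vectors
    (xdot : EuclideanSpace ℝ (Fin B × Fin Ω))
    (isel : ℕ → Fin n) (lsel : ℕ → Fin B)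
    -- Algorithm I iterates
    (x y z v : ℕ → EuclideanSpace ℝ (Fin B × Fin Ω))
    (hy : ∀ j, 1 ≤ j → j ≤ m →
      y j = α1 • x (j - 1) + α2 • z (j - 1) + α3 • xdot)
    (hv : ∀ j, 1 ≤ j → j ≤ m → ∀ o : Fin Ω,
      v j (lsel j, o) = gradient F xdot (lsel j, o)
        + (gradient (f (isel j)) (y j) (lsel j, o) - gradient (f (isel j)) xdot (lsel j, o)))
    (hz : ∀ j, 1 ≤ j → j ≤ m → ∀ o : Fin Ω,
      z j (lsel j, o)
        = p (lsel j) (WithLp.toLp 2 (fun o' => z (j - 1) (lsel j, o') - η * v j (lsel j, o'))) o)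
    (hzrest : ∀ j, 1 ≤ j → j ≤ m → ∀ q : Fin B × Fin Ω, q.1 ≠ lsel j → z j q = z (j - 1) q)
    (hx : ∀ j, 1 ≤ j → j ≤ m → x j = y j + (α2 * (B : ℝ)) • (z j - z (j - 1)))
    -- Algorithm II iterates; `βm1 j` denotes `β_{j−1}`, so `βm1 0 = β_{−1} = 1`
    (zhat u vdot ybar zbar xbar : ℕ → EuclideanSpace ℝ (Fin B × Fin Ω))
    (βm1 : ℕ → ℝ) (hβ0 : βm1 0 = 1) (hβrec : ∀ j, βm1 (j + 1) = α1 * βm1 j)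
    (hzhat0 : zhat 0 = z 0 - xdot)
    (hu0 : u 0 = x 0 - γ • zhat 0 - xdot)
    (hybar : ∀ j, 1 ≤ j → j ≤ m → ybar j = βm1 j • u (j - 1) + γ • zhat (j - 1) + xdot)
    (hvdot : ∀ j, 1 ≤ j → j ≤ m → ∀ o : Fin Ω,
      vdot j (lsel j, o) = gradient F xdot (lsel j, o)
        + (gradient (f (isel j)) (ybar j) (lsel j, o) - gradient (f (isel j)) xdot (lsel j, o)))
    (hzhat : ∀ j, 1 ≤ j → j ≤ m → ∀ o : Fin Ω,
      zhat j (lsel j, o)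
        = p (lsel j) (WithLp.toLp 2 (fun o' => (zhat (j - 1) + xdot) (lsel j, o') - η * vdot j (lsel j, o'))) o
          - xdot (lsel j, o))
    (hzhatrest : ∀ j, 1 ≤ j → j ≤ m →
      ∀ q : Fin B × Fin Ω, q.1 ≠ lsel j → zhat j q = zhat (j - 1) q)
    (hu : ∀ j, 1 ≤ j → j ≤ m →
      u j = u (j - 1) + ((α2 * (B : ℝ) - γ) / βm1 j) • (zhat j - zhat (j - 1)))
    (hzbar : ∀ j, 1 ≤ j → j ≤ m → zbar j = zhat j + xdot)
    (hxbar : ∀ j, 1 ≤ j → j ≤ m → xbar j = βm1 j • u j + γ • zhat j + xdot) :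
    ∀ j, 1 ≤ j → j ≤ m → y j = ybar j ∧ z j = zbar j ∧ x j = xbar j := by
  have hβ : ∀ j, βm1 j ≠ 0 := fun j => by
    induction j with
    | zero => simp [hβ0]
    | succ k ih => rw [hβrec]; exact mul_ne_zero hα1 ih
  have hγfix : α1 * γ + α2 = γ := mul_add_eq_self_of_eq_div hsum hα23 hγ
  have hzk (k) (h : zhat k = z k - xdot) : z k = zhat k + xdot := by rw [h, sub_add_cancel]
  have hyk (k) (hk : k + 1 ≤ m)
      (h : x k = βm1 k • u k + γ • zhat k + xdot ∧ zhat k = z k - xdot) :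
      y (k + 1) = ybar (k + 1) := by
    have hk1 : 1 ≤ k + 1 := Nat.le_add_left 1 k
    rw [hy _ hk1 hk, hybar _ hk1 hk, Nat.add_sub_cancel, hβrec]
    exact momentum_point_eq hsum hγfix h.1 (hzk k h.2)
  have shifted : ∀ j ≤ m, x j = βm1 j • u j + γ • zhat j + xdot ∧ zhat j = z j - xdot := by
    intro j
    induction j with
    | zero =>
      intro _
      refine ⟨?_, hzhat0⟩
      rw [hu0, hβ0, one_smul]
      abel
    | succ k ih =>
      intro hk
      have hk1 : 1 ≤ k + 1 := Nat.le_add_left 1 k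
      have ihk := ih (by omega)
      have hyeq := hyk k hk ihk
      have hzeq : zhat (k + 1) = z (k + 1) - xdot := by
        refine EuclideanSpace.eq_sub_of_block_update ihk.2 (fun o => ?_)
          (hzrest _ hk1 hk) (hzhatrest _ hk1 hk)
        simp only [hzhat _ hk1 hk, hz _ hk1 hk, hv _ hk1 hk, hvdot _ hk1 hk, hyeq,
          Nat.add_sub_cancel, hzk k ihk.2]
      refine ⟨?_, hzeq⟩
      rw [hx _ hk1 hk, hu _ hk1 hk, hyeq, hybar _ hk1 hk, Nat.add_sub_cancel, hzk _ hzeq,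
        hzk k ihk.2]
      exact momentum_step_eq (hβ _) _ _ _ _
  intro j hj hjm
  obtain ⟨k, rfl⟩ : ∃ k, j = k + 1 := ⟨j - 1, by omega⟩
  obtain ⟨hxj, hzj⟩ := shifted (k + 1) hjm
  exact ⟨hyk k hjm (shifted k (by omega)), by rw [hzbar _ hj hjm, hzk _ hzj],
    by rw [hxbar _ hj hjm, hxj]⟩

/-- Equivalence of ADSG (Algorithm I) and its efficient implementation (Algorithm II)
within one epoch, with the same sample and block choices: for all `j = 1,…,m`,
`y_j = ȳ_j`, `z_j = z̄_j`, and `x_j = x̄_j`. -/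
theorem adsg_implementation_equiv
    (B Ω n m : ℕ) (hB : 0 < B) (hΩ : 0 < Ω) (hn : 1 ≤ n) (hm : 1 ≤ m)
    (f : Fin n → EuclideanSpace ℝ (Fin B × Fin Ω) → ℝ)
    (hdiff : ∀ i, Differentiable ℝ (f i))
    (F : EuclideanSpace ℝ (Fin B × Fin Ω) → ℝ)
    (hF : ∀ x, F x = (1 / (n : ℝ)) * ∑ i, f i x)
    (P : EuclideanSpace ℝ (Fin B × Fin Ω) → ℝ)
    (Pl : Fin B → EuclideanSpace ℝ (Fin Ω) → ℝ)
    (hPsep : ∀ x, P x = ∑ l : Fin B, Pl l (WithLp.toLp 2 (fun o => x (l, o))))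
    (η : ℝ) (hη : 0 < η)
    -- the proximal maps of the blocks of `P`
    (p : Fin B → EuclideanSpace ℝ (Fin Ω) → EuclideanSpace ℝ (Fin Ω))
    (hp : ∀ (l : Fin B) (w u : EuclideanSpace ℝ (Fin Ω)),
      η * Pl l (p l w) + 1 / 2 * ‖p l w - w‖ ^ 2 ≤ η * Pl l u + 1 / 2 * ‖u - w‖ ^ 2)
    (α1 α2 α3 γ : ℝ) (hsum : α1 + α2 + α3 = 1) (hα1 : α1 ≠ 0) (hα23 : α2 + α3 ≠ 0)
    (hγ : γ = α2 / (α2 + α3))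
    -- snapshot, sample and block choices, epoch-start vectors
    (xdot : EuclideanSpace ℝ (Fin B × Fin Ω))
    (isel : ℕ → Fin n) (lsel : ℕ → Fin B)
    -- Algorithm I iterates
    (x y z v : ℕ → EuclideanSpace ℝ (Fin B × Fin Ω))
    (hy : ∀ j, 1 ≤ j → j ≤ m →
      y j = α1 • x (j - 1) + α2 • z (j - 1) + α3 • xdot)
    (hv : ∀ j, 1 ≤ j → j ≤ m → ∀ o : Fin Ω,
      v j (lsel j, o) = gradient F xdot (lsel j, o)
        + (gradient (f (isel j)) (y j) (lsel j, o) - gradient (f (isel j)) xdot (lsel j, o)))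
    (hz : ∀ j, 1 ≤ j → j ≤ m → ∀ o : Fin Ω,
      z j (lsel j, o)
        = p (lsel j) (WithLp.toLp 2 (fun o' => z (j - 1) (lsel j, o') - η * v j (lsel j, o'))) o)
    (hzrest : ∀ j, 1 ≤ j → j ≤ m → ∀ q : Fin B × Fin Ω, q.1 ≠ lsel j → z j q = z (j - 1) q)
    (hx : ∀ j, 1 ≤ j → j ≤ m → x j = y j + (α2 * (B : ℝ)) • (z j - z (j - 1)))
    -- Algorithm II iterates; `βm1 j` denotes `β_{j−1}`, so `βm1 0 = β_{−1} = 1`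
    (zhat u vdot ybar zbar xbar : ℕ → EuclideanSpace ℝ (Fin B × Fin Ω))
    (βm1 : ℕ → ℝ) (hβ0 : βm1 0 = 1) (hβrec : ∀ j, βm1 (j + 1) = α1 * βm1 j)
    (hzhat0 : zhat 0 = z 0 - xdot)
    (hu0 : u 0 = x 0 - γ • zhat 0 - xdot)
    (hybar : ∀ j, 1 ≤ j → j ≤ m → ybar j = βm1 j • u (j - 1) + γ • zhat (j - 1) + xdot)
    (hvdot : ∀ j, 1 ≤ j → j ≤ m → ∀ o : Fin Ω,
      vdot j (lsel j, o) = gradient F xdot (lsel j, o)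
        + (gradient (f (isel j)) (ybar j) (lsel j, o) - gradient (f (isel j)) xdot (lsel j, o)))
    (hzhat : ∀ j, 1 ≤ j → j ≤ m → ∀ o : Fin Ω,
      zhat j (lsel j, o)
        = p (lsel j) (WithLp.toLp 2 (fun o' => (zhat (j - 1) + xdot) (lsel j, o') - η * vdot j (lsel j, o'))) o
          - xdot (lsel j, o))
    (hzhatrest : ∀ j, 1 ≤ j → j ≤ m →
      ∀ q : Fin B × Fin Ω, q.1 ≠ lsel j → zhat j q = zhat (j - 1) q)
    (hu : ∀ j, 1 ≤ j → j ≤ m →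
      u j = u (j - 1) + ((α2 * (B : ℝ) - γ) / βm1 j) • (zhat j - zhat (j - 1)))
    (hzbar : ∀ j, 1 ≤ j → j ≤ m → zbar j = zhat j + xdot)
    (hxbar : ∀ j, 1 ≤ j → j ≤ m → xbar j = βm1 j • u j + γ • zhat j + xdot) :
    ∀ j, 1 ≤ j → j ≤ m → y j = ybar j ∧ z j = zbar j ∧ x j = xbar j :=
  adsg_implementation_equiv_general B Ω n m f F η p α1 α2 α3 γ hsum hα1 hα23 hγ xdot isel lsel x y z
    v hy hv hz hzrest hx zhat u vdot ybar zbar xbar βm1 hβ0 hβrec hzhat0 hu0 hybar hvdot hzhat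
    hzhatrest hu hzbar hxbar
end

section
/- Let d = B·Ω with B, Ω positive integers, let α, c ∈ ℝ, m ≥ 1, and let l_1,…,l_m ∈ {1,…,B} be block choices. Let (ẑ_j)_{j=0}^{m} be vectors in ℝ^d such that for each j ≥ 1, [ẑ_j]_{l'} = [ẑ_{j−1}]_{l'} for all l' ≠ l_j. Define Ξ_0 = ξ_0 ∈ ℝ^d arbitrary and ω_0 = (0,…,0) ∈ ℕ^B, and for j = 1,…,m: Ξ_j = α Ξ_{j−1} + c (ẑ_j − ẑ_{j−1}); [ξ_j]_{l_j} = α^{ω_{j−1}(l_j)+1} [ξ_{j−1}]_{l_j} + c [ẑ_j − ẑ_{j−1}]_{l_j} and [ξ_j]_{l'} = [ξ_{j−1}]_{l'} for l' ≠ l_j; ω_j(l_j) = 0 and ω_j(l') = ω_{j−1}(l') + 1 for l' ≠ l_j. Then for every j = 0,…,m and every block l: [Ξ_j]_l = α^{ω_j(l)} [ξ_j]_l. -/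
/-!
Between two selections of a block `l`, the exact iterate `Ξ` only multiplies `[Ξ]_l` by `α`
(the increment `ẑ_j - ẑ_{j-1}` vanishes off the selected block), and the counter `ω(l)` records
how many such factors are still owed to `[ξ]_l`. When `l` is selected, the lazy update pays the
`ω(l) + 1` owed factors at once and resets the counter, so `[Ξ]_l = α ^ ω(l) * [ξ]_l` is preserved
at every step.
-/

section LazyUpdate

variable {β γ R : Type*} [CommRing R]

/-- Coordinates are indexed by pairs `(block, offset)`; `w` is the per-block staleness counter. -/
def LazyInvariant (α : R) (X x : β × γ → R) (w : β → ℕ) : Prop :=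
  ∀ q, X q = α ^ w q.1 * x q

theorem LazyInvariant.refl (α : R) (x : β × γ → R) : LazyInvariant α x x fun _ => 0 := by
  intro q
  rw [pow_zero, one_mul]

theorem LazyInvariant.step {α c : R} {X x z X' x' z' : β × γ → R} {w w' : β → ℕ} {l : β}
    (h : LazyInvariant α X x w)
    (hX' : ∀ q, X' q = α * X q + c * (z' q - z q))
    (hz' : ∀ q : β × γ, q.1 ≠ l → z' q = z q)
    (hx'sel : ∀ o, x' (l, o) = α ^ (w l + 1) * x (l, o) + c * (z' (l, o) - z (l, o)))
    (hx'rest : ∀ q : β × γ, q.1 ≠ l → x' q = x q)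
    (hw'sel : w' l = 0) (hw'rest : ∀ b, b ≠ l → w' b = w b + 1) :
    LazyInvariant α X' x' w' := by
  rintro ⟨b, o⟩
  rw [hX', h]
  by_cases hb : b = l
  · subst hb
    rw [hx'sel, hw'sel]
    ring
  · rw [hz' _ hb, hx'rest _ hb, hw'rest _ hb]
    ring

end LazyUpdate

theorem adsg_lazy_update_general
    (B Ω m : ℕ)
    (α c : ℝ) (lsel : ℕ → Fin B)
    (zhat Ξ ξ : ℕ → EuclideanSpace ℝ (Fin B × Fin Ω))
    (w : ℕ → Fin B → ℕ)
    (hzhat_rest : ∀ j, 1 ≤ j → j ≤ m →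
      ∀ q : Fin B × Fin Ω, q.1 ≠ lsel j → zhat j q = zhat (j - 1) q)
    (hΞ0 : Ξ 0 = ξ 0)
    (hw0 : ∀ l, w 0 l = 0)
    (hΞ : ∀ j, 1 ≤ j → j ≤ m → Ξ j = α • Ξ (j - 1) + c • (zhat j - zhat (j - 1)))
    (hξ : ∀ j, 1 ≤ j → j ≤ m → ∀ o : Fin Ω,
      ξ j (lsel j, o) = α ^ (w (j - 1) (lsel j) + 1) * ξ (j - 1) (lsel j, o)
        + c * (zhat j (lsel j, o) - zhat (j - 1) (lsel j, o)))
    (hξrest : ∀ j, 1 ≤ j → j ≤ m →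
      ∀ q : Fin B × Fin Ω, q.1 ≠ lsel j → ξ j q = ξ (j - 1) q)
    (hwsel : ∀ j, 1 ≤ j → j ≤ m → w j (lsel j) = 0)
    (hwrest : ∀ j, 1 ≤ j → j ≤ m → ∀ l : Fin B, l ≠ lsel j → w j l = w (j - 1) l + 1) :
    ∀ j, j ≤ m → ∀ q : Fin B × Fin Ω, Ξ j q = α ^ (w j q.1) * ξ j q := by
  intro j
  induction j with
  | zero =>
    intro _
    rw [hΞ0, show w 0 = fun _ => 0 from funext hw0]
    exact LazyInvariant.refl α _
  | succ n ih =>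
    intro hle
    have hn : 1 ≤ n + 1 := Nat.le_add_left 1 n
    refine LazyInvariant.step (ih (Nat.le_of_succ_le hle)) (fun q => ?_)
      (hzhat_rest _ hn hle) (hξ _ hn hle) (hξrest _ hn hle) (hwsel _ hn hle) (hwrest _ hn hle)
    rw [hΞ _ hn hle]
    simp

/-- Correctness of the lazy update of the ADSG momentum variable: with the exact
recursion `Ξ_j = α Ξ_{j−1} + c (ẑ_j − ẑ_{j−1})` and the lazy iterates `ξ_j` with
per-block staleness counters `w_j`, one has `[Ξ_j]_l = α^{w_j(l)} [ξ_j]_l` for all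
`j = 0,…,m` and all blocks `l`. -/
theorem adsg_lazy_update
    (B Ω m : ℕ) (hB : 0 < B) (hΩ : 0 < Ω) (hm : 1 ≤ m)
    (α c : ℝ) (lsel : ℕ → Fin B)
    (zhat Ξ ξ : ℕ → EuclideanSpace ℝ (Fin B × Fin Ω))
    (w : ℕ → Fin B → ℕ)
    (hzhat_rest : ∀ j, 1 ≤ j → j ≤ m →
      ∀ q : Fin B × Fin Ω, q.1 ≠ lsel j → zhat j q = zhat (j - 1) q)
    (hΞ0 : Ξ 0 = ξ 0)
    (hw0 : ∀ l, w 0 l = 0)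
    (hΞ : ∀ j, 1 ≤ j → j ≤ m → Ξ j = α • Ξ (j - 1) + c • (zhat j - zhat (j - 1)))
    (hξ : ∀ j, 1 ≤ j → j ≤ m → ∀ o : Fin Ω,
      ξ j (lsel j, o) = α ^ (w (j - 1) (lsel j) + 1) * ξ (j - 1) (lsel j, o)
        + c * (zhat j (lsel j, o) - zhat (j - 1) (lsel j, o)))
    (hξrest : ∀ j, 1 ≤ j → j ≤ m →
      ∀ q : Fin B × Fin Ω, q.1 ≠ lsel j → ξ j q = ξ (j - 1) q)
    (hwsel : ∀ j, 1 ≤ j → j ≤ m → w j (lsel j) = 0)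
    (hwrest : ∀ j, 1 ≤ j → j ≤ m → ∀ l : Fin B, l ≠ lsel j → w j l = w (j - 1) l + 1) :
    ∀ j, j ≤ m → ∀ q : Fin B × Fin Ω, Ξ j q = α ^ (w j q.1) * ξ j q :=
  adsg_lazy_update_general B Ω m α c lsel zhat Ξ ξ w hzhat_rest hΞ0 hw0 hΞ hξ hξrest hwsel hwrest
end

section
/- Let m ≥ 1 be an integer, θ > 0, and α_1, α_3 ≥ 0 reals with 1 − α_1 θ ≥ α_3 θ^m. Let D_0, D_1, …, D_m and A_0, A_1, …, A_m be reals, T a real, and T' ≥ 0 a real such that T' · Σ_{j=1}^{m} θ^{j−1} ≤ Σ_{j=1}^{m} θ^{j−1} D_j. If D_j + θ A_j ≤ α_3 T + α_1 D_{j−1} + A_{j−1} holds for every j = 1,…,m, then θ^m ( α_3 T' Σ_{j=0}^{m−1} θ^j + α_1 D_m + A_m ) ≤ α_1 D_0 + α_3 T Σ_{j=0}^{m−1} θ^j + A_0. -/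
/-!
Multiplying the `j`-th step of the recursion by `θ^(j-1)` and summing makes both the `A`-terms and
the `α₁ D`-terms telescope, leaving `(1 - α₁ θ) Σ θ^(j-1) D_j` on the left. The contraction
hypothesis bounds this from below by `α₃ θ^m Σ θ^(j-1) D_j`, and the averaging hypothesis on `T'`
bounds that in turn by `α₃ θ^m T' Σ θ^(j-1)`.
-/

open Finset

theorem discounted_sum_le_of_step_le {θ α c : ℝ} (hθ : 0 ≤ θ) {D A : ℕ → ℝ} {m : ℕ}
    (hstep : ∀ j < m, D (j + 1) + θ * A (j + 1) ≤ c + α * D j + A j) :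
    θ ^ m * (α * D m + A m) + (1 - α * θ) * ∑ j ∈ range m, θ ^ j * D (j + 1)
      ≤ α * D 0 + c * ∑ j ∈ range m, θ ^ j + A 0 := by
  have hweighted : ∀ j ∈ range m,
      (θ ^ (j + 1) * A (j + 1) - θ ^ j * A j) + α * (θ ^ (j + 1) * D (j + 1) - θ ^ j * D j)
        + (1 - α * θ) * (θ ^ j * D (j + 1)) ≤ c * θ ^ j := by
    intro j hj
    have := mul_le_mul_of_nonneg_left (hstep j (mem_range.1 hj)) (pow_nonneg hθ j)
    rw [pow_succ]
    linear_combination this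
  have hsum := sum_le_sum hweighted
  rw [sum_add_distrib, sum_add_distrib, ← mul_sum, ← mul_sum, ← mul_sum,
    sum_range_sub (fun j => θ ^ j * A j), sum_range_sub (fun j => θ ^ j * D j)] at hsum
  simp only [pow_zero, one_mul] at hsum
  linarith

theorem adsg_epoch_recursion_general (m : ℕ) (θ α1 α3 : ℝ)
    (hθ : 0 < θ) (hα3 : 0 ≤ α3)
    (hcontr : α3 * θ ^ m ≤ 1 - α1 * θ)
    (D A : ℕ → ℝ) (T T' : ℝ) (hT' : 0 ≤ T')
    (hT'le : T' * ∑ j ∈ Finset.range m, θ ^ j ≤ ∑ j ∈ Finset.range m, θ ^ j * D (j + 1))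
    (hrec : ∀ j, 1 ≤ j → j ≤ m → D j + θ * A j ≤ α3 * T + α1 * D (j - 1) + A (j - 1)) :
    θ ^ m * (α3 * T' * ∑ j ∈ Finset.range m, θ ^ j + α1 * D m + A m)
      ≤ α1 * D 0 + α3 * T * ∑ j ∈ Finset.range m, θ ^ j + A 0 := by
  set SD := ∑ j ∈ range m, θ ^ j * D (j + 1)
  have htelescoped := discounted_sum_le_of_step_le (c := α3 * T) hθ.le fun j hj =>
    hrec (j + 1) j.succ_pos hj
  have hSD_nonneg : 0 ≤ SD :=
    (mul_nonneg hT' (sum_nonneg fun j _ => (pow_pos hθ j).le)).trans hT'le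
  have hweight_nonneg : 0 ≤ α3 * θ ^ m := mul_nonneg hα3 (pow_pos hθ m).le
  linarith [mul_le_mul_of_nonneg_left hT'le hweight_nonneg,
    mul_le_mul_of_nonneg_right hcontr hSD_nonneg]

/-- Epoch-level recursion of the ADSG convergence proof: if
`D_j + θ A_j ≤ α₃ T + α₁ D_{j−1} + A_{j−1}` for `j = 1,…,m`, `1 − α₁ θ ≥ α₃ θ^m`,
and `T' Σ_{j=1}^m θ^{j−1} ≤ Σ_{j=1}^m θ^{j−1} D_j` with `T' ≥ 0`, then
`θ^m (α₃ T' Σ_{j=0}^{m−1} θ^j + α₁ D_m + A_m) ≤ α₁ D_0 + α₃ T Σ_{j=0}^{m−1} θ^j + A_0`. -/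
theorem adsg_epoch_recursion (m : ℕ) (hm : 1 ≤ m) (θ α1 α3 : ℝ)
    (hθ : 0 < θ) (hα1 : 0 ≤ α1) (hα3 : 0 ≤ α3)
    (hcontr : α3 * θ ^ m ≤ 1 - α1 * θ)
    (D A : ℕ → ℝ) (T T' : ℝ) (hT' : 0 ≤ T')
    (hT'le : T' * ∑ j ∈ Finset.range m, θ ^ j ≤ ∑ j ∈ Finset.range m, θ ^ j * D (j + 1))
    (hrec : ∀ j, 1 ≤ j → j ≤ m → D j + θ * A j ≤ α3 * T + α1 * D (j - 1) + A (j - 1)) :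
    θ ^ m * (α3 * T' * ∑ j ∈ Finset.range m, θ ^ j + α1 * D m + A m)
      ≤ α1 * D 0 + α3 * T * ∑ j ∈ Finset.range m, θ ^ j + A 0 :=
  adsg_epoch_recursion_general m θ α1 α3 hθ hα3 hcontr D A T T' hT' hT'le hrec
end

section
/- Let y₀ ∈ {−1, 1}, λ > 0, and α ∈ ℝ. Then the supremum of the set { α·β − y₀·β − (λ/2)·β² : β ∈ ℝ, −1 ≤ y₀·β ≤ 0 } equals: 0 if y₀·α > 1; (y₀·α − 1)²/(2λ) if 1 − λ ≤ y₀·α ≤ 1; and 1 − y₀·α − λ/2 if y₀·α < 1 − λ. -/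
/-!
The substitution `t = y₀ β` (an involution, since `y₀² = 1`) turns the objective into the concave
quadratic `t ↦ (y₀ α - 1) t - (λ/2) t²` on `[-1, 0]`. Its unconstrained maximiser is
`t = (y₀ α - 1)/λ`; the three regimes are the maximiser lying to the right of `0`, inside
`[-1, 0]`, or to the left of `-1`, in which cases the maximum is attained at `0`, at the vertex,
or at `-1`.
-/

open Set

section QuadraticOnIcc

variable {c lam : ℝ}

theorem isGreatest_quadratic_Icc_of_nonneg (hlam : 0 ≤ lam) (hc : 0 ≤ c) :
    IsGreatest ((fun t : ℝ => c * t - lam / 2 * t ^ 2) '' Icc (-1) 0) 0 := by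
  refine ⟨⟨0, ⟨by norm_num, le_rfl⟩, by ring⟩, ?_⟩
  rintro _ ⟨t, ⟨-, ht⟩, rfl⟩
  nlinarith [mul_nonneg hc (neg_nonneg.mpr ht), mul_nonneg hlam (sq_nonneg t)]

theorem isGreatest_quadratic_Icc_of_mem (hlam : 0 < lam) (hc₁ : -lam ≤ c) (hc₂ : c ≤ 0) :
    IsGreatest ((fun t : ℝ => c * t - lam / 2 * t ^ 2) '' Icc (-1) 0) (c ^ 2 / (2 * lam)) := by
  refine ⟨⟨c / lam, ⟨?_, div_nonpos_of_nonpos_of_nonneg hc₂ hlam.le⟩, ?_⟩, ?_⟩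
  · rwa [le_div_iff₀ hlam, neg_one_mul]
  · field_simp
    ring
  · rintro _ ⟨t, -, rfl⟩
    rw [le_div_iff₀ (by positivity)]
    nlinarith [sq_nonneg (c - lam * t)]

theorem isGreatest_quadratic_Icc_of_le (hlam : 0 ≤ lam) (hc : c ≤ -lam) :
    IsGreatest ((fun t : ℝ => c * t - lam / 2 * t ^ 2) '' Icc (-1) 0) (-c - lam / 2) := by
  refine ⟨⟨-1, ⟨le_rfl, by norm_num⟩, by ring⟩, ?_⟩
  rintro _ ⟨t, ⟨ht₁, ht₂⟩, rfl⟩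
  -- `f(-1) - f(t) = (t + 1) (λ/2 (t - 1) - c)`, and both factors are nonnegative.
  have hslope : 0 ≤ lam / 2 * (t - 1) - c := by nlinarith [mul_nonneg hlam (neg_nonneg.mpr ht₂)]
  nlinarith [mul_nonneg (neg_le_iff_add_nonneg.mp ht₁) hslope]

end QuadraticOnIcc

/-- λ-smoothing of the hinge loss with label `y₀ ∈ {−1,1}`:
`sup { αβ − y₀β − (λ/2)β² : −1 ≤ y₀β ≤ 0 }` equals the smoothed hinge loss. -/
theorem smoothed_hinge (y₀ lam α : ℝ) (hy : y₀ = -1 ∨ y₀ = 1) (hlam : 0 < lam) :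
    (1 < y₀ * α →
      sSup ((fun β : ℝ => α * β - y₀ * β - lam / 2 * β ^ 2) ''
        {β : ℝ | -1 ≤ y₀ * β ∧ y₀ * β ≤ 0}) = 0) ∧
    (1 - lam ≤ y₀ * α → y₀ * α ≤ 1 →
      sSup ((fun β : ℝ => α * β - y₀ * β - lam / 2 * β ^ 2) ''
        {β : ℝ | -1 ≤ y₀ * β ∧ y₀ * β ≤ 0}) = (y₀ * α - 1) ^ 2 / (2 * lam)) ∧
    (y₀ * α < 1 - lam →
      sSup ((fun β : ℝ => α * β - y₀ * β - lam / 2 * β ^ 2) ''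
        {β : ℝ | -1 ≤ y₀ * β ∧ y₀ * β ≤ 0}) = 1 - y₀ * α - lam / 2) := by
  have hy₀ : y₀ * y₀ = 1 := by rcases hy with rfl | rfl <;> norm_num
  have hsubst : (fun β : ℝ => α * β - y₀ * β - lam / 2 * β ^ 2) =
      (fun t : ℝ => (y₀ * α - 1) * t - lam / 2 * t ^ 2) ∘ (y₀ * ·) := by
    funext β
    simp only [Function.comp_apply]
    linear_combination (-(α * β) + lam / 2 * β ^ 2) * hy₀
  have himage : (fun β : ℝ => α * β - y₀ * β - lam / 2 * β ^ 2) ''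
      {β : ℝ | -1 ≤ y₀ * β ∧ y₀ * β ≤ 0} =
      (fun t : ℝ => (y₀ * α - 1) * t - lam / 2 * t ^ 2) '' Icc (-1) 0 := by
    rw [hsubst, image_comp]
    exact congrArg _ <|
      image_preimage_eq (Icc (-1) 0) (mul_left_surjective₀ (left_ne_zero_of_mul_eq_one hy₀))
  rw [himage]
  refine ⟨fun h => ?_, fun h₁ h₂ => ?_, fun h => ?_⟩
  · exact (isGreatest_quadratic_Icc_of_nonneg hlam.le (by linarith)).csSup_eq
  · exact (isGreatest_quadratic_Icc_of_mem hlam (by linarith) (by linarith)).csSup_eq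
  · rw [show 1 - y₀ * α - lam / 2 = -(y₀ * α - 1) - lam / 2 by ring]
    exact (isGreatest_quadratic_Icc_of_le hlam.le (by linarith)).csSup_eq
end
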